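/- Let t > 0 be real, set z := t·√(1 + t/2), m² := 1/(2z), u₁ := −m²·(2t + (3/4)t²), g₂(u) := (4/3)u² − 1, g₃(u) := z/8 − u/3 + (8/27)u³, and D(u) := g₂(u)³ − 27g₃(u)². Then the u-derivative of the discriminant satisfies D′(u₁) = −2t(1 + 3t/4)³/z. Consequently, with 𝚖 := 1728·g₂(u₁)³/D′(u₁) and 𝚡 := √(z/(4t(1 + 3t/4))) (the positive square root), one has −4·𝚖·𝚡⁷ = (1 + t/2)^{−3/4}·(1 + 3t/4)^{−1/2}. -/

import Mathlib

open Real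

/-!
Put `s = √(1 + t/2)` and `w = 1 + 3t/4`; after substituting `t = 2(s² − 1)` everything is
rational in `s`. The monopole point is `u₁ = −(2 + 3t/4)/(2s)`, where `g₂ = 3c²` and `g₃ = c³`
with `c = w/(3s)`, and `D′ = 3g₂²g₂′ − 54g₃g₃′` evaluates there to `−2w³/s`. Hence
`𝚖 = −32w³/s⁵` and `𝚡 = √(s/(4w))`, and writing `s = a²`, `w = b²` turns `−4𝚖𝚡⁷` into
`1/(a³b) = (s²)^(−3/4) w^(−1/2)`.
-/

noncomputable def swG2 (u : ℝ) : ℝ := 4/3 * u^2 - 1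

noncomputable def swG3 (z u : ℝ) : ℝ := z/8 - u/3 + 8/27 * u^3

theorem hasDerivAt_swG2 (u : ℝ) : HasDerivAt swG2 (8/3 * u) u := by
  have := ((hasDerivAt_pow 2 u).const_mul (4/3 : ℝ)).sub_const 1
  exact this.congr_deriv (by norm_num; ring)

theorem hasDerivAt_swG3 (z u : ℝ) : HasDerivAt (swG3 z) (-1/3 + 8/9 * u^2) u := by
  have := (((hasDerivAt_id u).div_const 3).const_sub (z/8)).add
    ((hasDerivAt_pow 3 u).const_mul (8/27 : ℝ))
  exact this.congr_deriv (by norm_num; ring)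

theorem HasDerivAt.cube_sub_twentyseven_mul_sq {g₂ g₃ : ℝ → ℝ} {g₂' g₃' u : ℝ}
    (h₂ : HasDerivAt g₂ g₂' u) (h₃ : HasDerivAt g₃ g₃' u) :
    HasDerivAt (fun u => g₂ u ^ 3 - 27 * g₃ u ^ 2)
      (3 * g₂ u ^ 2 * g₂' - 54 * g₃ u * g₃') u :=
  ((h₂.pow 3).sub ((h₃.pow 2).const_mul 27)).congr_deriv (by norm_num; ring)

theorem swG2_monopole {t s : ℝ} (hs : s ≠ 0) (hs2 : s ^ 2 = 1 + t/2) :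
    swG2 (-(2 + 3*t/4) / (2*s)) = (1 + 3*t/4)^2 / (3 * s^2) := by
  obtain rfl : t = 2 * (s^2 - 1) := by linarith
  unfold swG2
  field_simp
  ring

theorem swG3_monopole {t s : ℝ} (hs : s ≠ 0) (hs2 : s ^ 2 = 1 + t/2) :
    swG3 (t * s) (-(2 + 3*t/4) / (2*s)) = (1 + 3*t/4)^3 / (27 * s^3) := by
  obtain rfl : t = 2 * (s^2 - 1) := by linarith
  unfold swG3
  field_simp
  ring

theorem discriminant_deriv_monopole {t s : ℝ} (hs : s ≠ 0) (hs2 : s ^ 2 = 1 + t/2)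
    {u : ℝ} (hu : u = -(2 + 3*t/4) / (2*s)) :
    3 * swG2 u ^ 2 * (8/3 * u) - 54 * swG3 (t * s) u * (-1/3 + 8/9 * u^2)
      = -2 * (1 + 3*t/4)^3 / s := by
  subst hu
  rw [swG2_monopole hs hs2, swG3_monopole hs hs2]
  obtain rfl : t = 2 * (s^2 - 1) := by linarith
  field_simp
  ring

theorem pow_rpow_neg_div_eq_inv_pow {a : ℝ} (ha : 0 ≤ a) {n : ℕ} (hn : n ≠ 0) (k : ℕ) :
    (a ^ n) ^ (-(k : ℝ) / n) = (a ^ k)⁻¹ := by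
  rw [← rpow_natCast_mul ha, mul_div_cancel₀ _ (Nat.cast_ne_zero.mpr hn), rpow_neg ha,
    rpow_natCast]

theorem neg_four_mul_mul_sqrt_pow_seven {s w : ℝ} (hs : 0 < s) (hw : 0 < w) :
    -4 * (-32 * w^3 / s^5) * √(s / (4*w)) ^ 7 = (s^2) ^ (-(3:ℝ)/4) * w ^ (-(1:ℝ)/2) := by
  obtain ⟨a, ha, rfl⟩ : ∃ a, 0 < a ∧ a ^ 2 = s := ⟨√s, sqrt_pos.mpr hs, sq_sqrt hs.le⟩
  obtain ⟨b, hb, rfl⟩ : ∃ b, 0 < b ∧ b ^ 2 = w := ⟨√w, sqrt_pos.mpr hw, sq_sqrt hw.le⟩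
  have hsqrt : √(a^2 / (4 * b^2)) = a / (2 * b) := by
    rw [show a^2 / (4 * b^2) = (a / (2*b))^2 by ring, sqrt_sq (by positivity)]
  have h34 := pow_rpow_neg_div_eq_inv_pow ha.le (n := 4) (by norm_num) 3
  have h12 := pow_rpow_neg_div_eq_inv_pow hb.le (n := 2) (by norm_num) 1
  push_cast at h34 h12
  rw [hsqrt, show (a^2)^2 = a^4 by ring, h34, h12]
  field_simp
  ring

theorem stmt_7 (t z m2 u1 : ℝ) (ht : 0 < t)
    (hz : z = t * Real.sqrt (1 + t/2))
    (hm2 : m2 = 1/(2*z))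
    (hu1 : u1 = -m2 * (2*t + (3/4)*t^2))
    (g2 g3 D : ℝ → ℝ)
    (hg2 : ∀ u, g2 u = (4/3)*u^2 - 1)
    (hg3 : ∀ u, g3 u = z/8 - u/3 + (8/27)*u^3)
    (hD : ∀ u, D u = g2 u ^ 3 - 27 * g3 u ^ 2)
    (mCoef xPer : ℝ)
    (hmCoef : mCoef = 1728 * g2 u1 ^ 3 / deriv D u1)
    (hxPer : xPer = Real.sqrt (z/(4*t*(1 + 3*t/4)))) :
    deriv D u1 = -2*t*(1 + 3*t/4)^3/z ∧
    -4 * mCoef * xPer^7 = (1 + t/2) ^ (-(3:ℝ)/4) * (1 + 3*t/4) ^ (-(1:ℝ)/2) := by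
  set s := √(1 + t/2)
  have hs : 0 < s := sqrt_pos.mpr (by linarith)
  have hs2 : s ^ 2 = 1 + t/2 := sq_sqrt (by linarith)
  have hw : 0 < 1 + 3*t/4 := by linarith
  subst hz
  have hu : u1 = -(2 + 3*t/4) / (2*s) := by rw [hu1, hm2]; field_simp
  obtain rfl : g2 = swG2 := funext hg2
  obtain rfl : g3 = swG3 (t * s) := funext hg3
  obtain rfl : D = fun u => swG2 u ^ 3 - 27 * swG3 (t * s) u ^ 2 := funext hD
  have hderiv : deriv (fun u => swG2 u ^ 3 - 27 * swG3 (t * s) u ^ 2) u1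
      = -2*t*(1 + 3*t/4)^3/(t*s) := by
    rw [((hasDerivAt_swG2 u1).cube_sub_twentyseven_mul_sq (hasDerivAt_swG3 _ u1)).deriv,
      discriminant_deriv_monopole hs.ne' hs2 hu]
    field_simp
  refine ⟨hderiv, ?_⟩
  have hm : mCoef = -32 * (1 + 3*t/4)^3 / s^5 := by
    rw [hmCoef, hderiv, hu, swG2_monopole hs.ne' hs2]
    field_simp
    ring
  have hx : xPer = √(s / (4 * (1 + 3*t/4))) := by
    rw [hxPer]
    congr 1
    field_simp
  rw [hm, hx, neg_four_mul_mul_sqrt_pow_seven hs hw, hs2]
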